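/- arXiv:2507.05210 — 3 statements merged into one kernel-verified Lean document; each statement's English description precedes it below -/
import Mathlib

section
/- Let x̄ ∈ ℝ. Let M, S : ℝ → ℝ be differentiable at every point of (x̄, x̄ + ε₀) for some ε₀ > 0, with the right limits M(x̄⁺) and S(x̄⁺) existing and equal, and with d_M := lim_{x → x̄⁺} M'(x) and d_S := lim_{x → x̄⁺} S'(x) existing and d_S ≠ 0. Set s(x) := S(x) − S(x̄⁺) and θ := sgn(d_S). Let X be a real random variable whose law admits a density f_X with respect to Lebesgue measure that is continuous on (x̄, x̄ + ε₁) for some ε₁ > 0, and such that f₊ := lim_{x → x̄⁺} f_X(x) exists and is strictly positive. Then there exists ε > 0 such that, with I := (x̄, x̄ + ε), one has ℙ(X ∈ I) > 0 and: (i) for every x ∈ I, the conditional CDF G(t) := ℙ(s(X) ≤ t | X ∈ I) is differentiable at t = s(x) with strictly positive derivative g(s(x)) = f_X(x)/(ℙ(X ∈ I)·|s'(x)|); (ii) the limit g₀ := lim_{x → x̄⁺} g(s(x)) exists, is strictly positive, and equals (f₊/ℙ(X ∈ I))/|d_S|; and (iii) lim_{x → x̄⁺} (M(x) − S(x))/(x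 − x̄) = d_M − θ·(f₊/ℙ(X ∈ I))/g₀. -/
open Filter Set Topology MeasureTheory

/-!
On a short interval `I = (xb, xb + ε)` the density is positive and `S'` does not vanish, so by
Darboux's theorem `S` is strictly monotone on `I`. The sublevel set `{y ∈ I | S y ≤ t}` is then
`(xb, w t]` or `[w t, xb + ε)` for a local inverse `w` of `S`, so `ℙ(X ∈ I)` times the
conditional CDF of `s (X)` is `∫_{xb}^{w (t + Sp)} f_X` or `∫_{w (t + Sp)}^{xb + ε} f_X`, and
the chain rule with `w' = 1 / S'` gives its density `f_X / (ℙ(X ∈ I) |S'|)`. Hence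
`g₀ = (f₊ / ℙ(X ∈ I)) / |dS|`, so `sgn dS * (f₊ / ℙ(X ∈ I)) / g₀ = sgn dS * |dS| = dS`, and the
average marginal effect is l'Hôpital's rule for `(M - S) / (x - xb)`, whose numerator tends to
`Mp - Sp = 0`.
-/

theorem StrictMonoOn.image_mem_nhds {α β : Type*} [ConditionallyCompleteLinearOrder α]
    [TopologicalSpace α] [OrderTopology α] [DenselyOrdered α] [NoMaxOrder α] [NoMinOrder α]
    [LinearOrder β] [TopologicalSpace β] [OrderTopology β] {T : α → β} {s : Set α} {x : α}
    (hmono : StrictMonoOn T s) (hcont : ContinuousOn T s) (hs : s ∈ 𝓝 x) :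
    T '' s ∈ 𝓝 (T x) := by
  obtain ⟨l, u, ⟨hlx, hxu⟩, hsub⟩ := mem_nhds_iff_exists_Ioo_subset.mp hs
  obtain ⟨a, hla, hax⟩ := exists_between hlx
  obtain ⟨b, hxb, hbu⟩ := exists_between hxu
  have hIcc : Icc a b ⊆ s := (Icc_subset_Ioo hla hbu).trans hsub
  have hxs : x ∈ s := mem_of_mem_nhds hs
  refine mem_of_superset (Icc_mem_nhds (hmono (hIcc ⟨le_rfl, (hax.trans hxb).le⟩) hxs hax)
    (hmono hxs (hIcc ⟨(hax.trans hxb).le, le_rfl⟩) hxb)) ?_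
  exact (intermediate_value_Icc (hax.trans hxb).le (hcont.mono hIcc)).trans (image_mono hIcc)

theorem StrictMonoOn.exists_hasDerivAt_localInverse {T : ℝ → ℝ} {s : Set ℝ} {x T'x : ℝ}
    (hmono : StrictMonoOn T s) (hcont : ContinuousOn T s) (hs : s ∈ 𝓝 x)
    (hT : HasDerivAt T T'x x) (hT'x : T'x ≠ 0) :
    ∃ w : ℝ → ℝ, w (T x) = x ∧ HasDerivAt w T'x⁻¹ (T x) ∧
      ∀ᶠ t in 𝓝 (T x), w t ∈ s ∧ T (w t) = t := by
  set w := Function.invFunOn T s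
  have hleft : LeftInvOn w T s := hmono.injOn.leftInvOn_invFunOn
  have hwx : w (T x) = x := hleft (mem_of_mem_nhds hs)
  have hwmono : MonotoneOn w (T '' s) := by
    rintro _ ⟨y₁, hy₁, rfl⟩ _ ⟨y₂, hy₂, rfl⟩ h
    rw [hleft hy₁, hleft hy₂]
    exact (hmono.le_iff_le hy₁ hy₂).mp h
  have himage : T '' s ∈ 𝓝 (T x) := hmono.image_mem_nhds hcont hs
  have hright : ∀ᶠ t in 𝓝 (T x), w t ∈ s ∧ T (w t) = t :=
    Filter.mem_of_superset himage fun _ ht => Function.invFunOn_pos ht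
  have hwcont : ContinuousAt w (T x) :=
    continuousAt_of_monotoneOn_of_image_mem_nhds hwmono himage (by rwa [hleft.image_image, hwx])
  exact ⟨w, hwx, (hwx ▸ hT).of_local_left_inverse hwcont hT'x (hright.mono fun _ h => h.2), hright⟩

theorem StrictAntiOn.exists_hasDerivAt_localInverse {T : ℝ → ℝ} {s : Set ℝ} {x T'x : ℝ}
    (hanti : StrictAntiOn T s) (hcont : ContinuousOn T s) (hs : s ∈ 𝓝 x)
    (hT : HasDerivAt T T'x x) (hT'x : T'x ≠ 0) :
    ∃ w : ℝ → ℝ, w (T x) = x ∧ HasDerivAt w T'x⁻¹ (T x) ∧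
      ∀ᶠ t in 𝓝 (T x), w t ∈ s ∧ T (w t) = t := by
  have hmono : StrictMonoOn (fun y => -T y) s := fun _ ha _ hb hab => neg_lt_neg (hanti ha hb hab)
  obtain ⟨w, hwx, hw, hev⟩ :=
    hmono.exists_hasDerivAt_localInverse hcont.neg hs hT.neg (neg_ne_zero.mpr hT'x)
  refine ⟨fun t => w (-t), hwx, ?_, ?_⟩
  · simpa [Function.comp_def] using hw.comp (T x) (hasDerivAt_neg (T x))
  · filter_upwards [(continuous_neg.tendsto (T x)).eventually hev] with t ht
    exact ⟨ht.1, by simpa using ht.2⟩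

section Sublevel

variable {α β : Type*} [LinearOrder α] [LinearOrder β] {T : α → β} {a b c : α}

theorem StrictMonoOn.sep_le_eq_Ioc (hmono : StrictMonoOn T (Ioo a b)) (hc : c ∈ Ioo a b) :
    {y ∈ Ioo a b | T y ≤ T c} = Ioc a c := by
  ext y
  constructor
  · rintro ⟨hy, hle⟩
    exact ⟨hy.1, (hmono.le_iff_le hy hc).mp hle⟩
  · rintro ⟨hay, hyc⟩
    have hy : y ∈ Ioo a b := ⟨hay, hyc.trans_lt hc.2⟩
    exact ⟨hy, (hmono.le_iff_le hy hc).mpr hyc⟩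

theorem StrictAntiOn.sep_le_eq_Ico (hanti : StrictAntiOn T (Ioo a b)) (hc : c ∈ Ioo a b) :
    {y ∈ Ioo a b | T y ≤ T c} = Ico c b := by
  ext y
  constructor
  · rintro ⟨hy, hle⟩
    exact ⟨(hanti.le_iff_ge hy hc).mp hle, hy.2⟩
  · rintro ⟨hcy, hyb⟩
    have hy : y ∈ Ioo a b := ⟨hc.1.trans_le hcy, hyb⟩
    exact ⟨hy, (hanti.le_iff_ge hy hc).mpr hcy⟩

end Sublevel

theorem hasDerivAt_setIntegral_sep_le {f T T' : ℝ → ℝ} {a b x : ℝ}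
    (hf : IntegrableOn f (Ioo a b)) (hfx : ContinuousAt f x) (hx : x ∈ Ioo a b)
    (hT : ∀ y ∈ Ioo a b, HasDerivAt T (T' y) y) (hT' : ∀ y ∈ Ioo a b, T' y ≠ 0) :
    HasDerivAt (fun t => ∫ y in {y ∈ Ioo a b | T y ≤ t}, f y) (f x / |T' x|) (T x) := by
  have hs : Ioo a b ∈ 𝓝 x := isOpen_Ioo.mem_nhds hx
  have hcont : ContinuousOn T (Ioo a b) := fun y hy => (hT y hy).continuousAt.continuousWithinAt
  have hT_within : ∀ y ∈ interior (Ioo a b), HasDerivWithinAt T (T' y) (interior (Ioo a b)) y := by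
    simpa only [interior_Ioo] using fun y hy => (hT y hy).hasDerivWithinAt
  have hint : ∀ c ∈ Ioc a b, IntervalIntegrable f volume a c := fun c hc =>
    (intervalIntegrable_iff_integrableOn_Ioo_of_le hc.1.le).mpr
      (hf.mono_set (Ioo_subset_Ioo_right hc.2))
  have hΦ : HasDerivAt (fun c => ∫ u in a..c, f u) (f x) x :=
    intervalIntegral.integral_hasDerivAt_right (hint x (Ioo_subset_Ioc_self hx))
      ⟨_, hs, hf.aestronglyMeasurable⟩ hfx
  rcases hasDerivWithinAt_forall_lt_or_forall_gt_of_forall_ne (convex_Ioo a b)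
    (fun y hy => (hT y hy).hasDerivWithinAt) hT' with hneg | hpos
  · have hanti : StrictAntiOn T (Ioo a b) :=
      strictAntiOn_of_hasDerivWithinAt_neg (convex_Ioo a b) hcont hT_within
        (by simpa only [interior_Ioo] using hneg)
    obtain ⟨w, hwx, hw, hev⟩ := hanti.exists_hasDerivAt_localInverse hcont hs (hT x hx) (hT' x hx)
    have hG : (fun t => ∫ y in {y ∈ Ioo a b | T y ≤ t}, f y) =ᶠ[𝓝 (T x)]
        fun t => (∫ u in a..b, f u) - ∫ u in a..w t, f u := by
      filter_upwards [hev] with t ⟨hwt, hTwt⟩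
      have hset := hanti.sep_le_eq_Ico hwt
      rw [hTwt] at hset
      rw [hset, integral_Ico_eq_integral_Ioc, ← intervalIntegral.integral_of_le hwt.2.le,
        intervalIntegral.integral_interval_sub_left (hint b ⟨hwt.1.trans hwt.2, le_rfl⟩)
          (hint (w t) (Ioo_subset_Ioc_self hwt))]
    rw [abs_of_neg (hneg x hx), div_neg, div_eq_mul_inv]
    exact ((hΦ.comp_of_eq (T x) hw hwx.symm).const_sub _).congr_of_eventuallyEq hG
  · have hmono : StrictMonoOn T (Ioo a b) :=
      strictMonoOn_of_hasDerivWithinAt_pos (convex_Ioo a b) hcont hT_within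
        (by simpa only [interior_Ioo] using hpos)
    obtain ⟨w, hwx, hw, hev⟩ := hmono.exists_hasDerivAt_localInverse hcont hs (hT x hx) (hT' x hx)
    have hG : (fun t => ∫ y in {y ∈ Ioo a b | T y ≤ t}, f y) =ᶠ[𝓝 (T x)]
        fun t => ∫ u in a..w t, f u := by
      filter_upwards [hev] with t ⟨hwt, hTwt⟩
      have hset := hmono.sep_le_eq_Ioc hwt
      rw [hTwt] at hset
      rw [hset, intervalIntegral.integral_of_le hwt.1.le]
    rw [abs_of_pos (hpos x hx), div_eq_mul_inv]
    exact (hΦ.comp_of_eq (T x) hw hwx.symm).congr_of_eventuallyEq hG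

theorem ContinuousOn.measurableSet_sep_le {α β : Type*} [TopologicalSpace α] [MeasurableSpace α]
    [OpensMeasurableSpace α] [TopologicalSpace β] [LinearOrder β] [OrderClosedTopology β]
    {s : Set α} {T : α → β} (hT : ContinuousOn T s) (hs : IsOpen s) (u : β) :
    MeasurableSet {y ∈ s | T y ≤ u} := by
  have hdiff : {y ∈ s | T y ≤ u} = s \ (s ∩ T ⁻¹' Ioi u) := by
    ext y
    simp only [Set.mem_ofPred_eq, Set.mem_sdiff, mem_inter_iff, mem_preimage, mem_Ioi, not_and,
      not_lt]
    tauto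
  rw [hdiff]
  exact hs.measurableSet.diff (hT.isOpen_inter_preimage hs isOpen_Ioi).measurableSet

section Density

variable {Ω α : Type*} [MeasurableSpace Ω] [MeasurableSpace α] {P : Measure Ω} {X : Ω → α}
  {μ : Measure α} {f : α → ℝ} {s : Set α}

theorem integrableOn_of_map_eq_withDensity [IsFiniteMeasure P] (hX : Measurable X)
    (hdens : P.map X = μ.withDensity fun y => ENNReal.ofReal (f y)) (hs : MeasurableSet s)
    (hfm : AEStronglyMeasurable f (μ.restrict s)) (hf0 : ∀ y ∈ s, 0 ≤ f y) :
    IntegrableOn f s μ := by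
  refine ⟨hfm, (hasFiniteIntegral_iff_ofReal ((ae_restrict_iff' hs).mpr (.of_forall hf0))).mpr ?_⟩
  rw [← withDensity_apply _ hs, ← hdens, Measure.map_apply hX hs]
  exact measure_lt_top P _

theorem toReal_measure_preimage_of_map_eq_withDensity (hX : Measurable X)
    (hdens : P.map X = μ.withDensity fun y => ENNReal.ofReal (f y)) (hs : MeasurableSet s)
    (hf : IntegrableOn f s μ) (hf0 : ∀ y ∈ s, 0 ≤ f y) :
    (P (X ⁻¹' s)).toReal = ∫ y in s, f y ∂μ := by
  rw [← Measure.map_apply hX hs, hdens, withDensity_apply _ hs,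
    ← ofReal_integral_eq_lintegral_ofReal hf ((ae_restrict_iff' hs).mpr (.of_forall hf0)),
    ENNReal.toReal_ofReal (setIntegral_nonneg hs hf0)]

end Density

theorem setIntegral_Ioo_pos {f : ℝ → ℝ} {a b : ℝ} (hab : a < b) (hf : IntegrableOn f (Ioo a b))
    (hpos : ∀ y ∈ Ioo a b, 0 < f y) : 0 < ∫ y in Ioo a b, f y := by
  rw [← integral_Ioc_eq_integral_Ioo, ← intervalIntegral.integral_of_le hab.le]
  exact intervalIntegral.intervalIntegral_pos_of_pos_on
    ((intervalIntegrable_iff_integrableOn_Ioo_of_le hab.le).mpr hf) hpos hab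

theorem exists_pos_le_forall_Ioo {p : ℝ → Prop} {a δ : ℝ} (hδ : 0 < δ)
    (hp : ∀ᶠ y in 𝓝[>] a, p y) : ∃ ε, 0 < ε ∧ ε ≤ δ ∧ ∀ y ∈ Ioo a (a + ε), p y := by
  obtain ⟨u, hu, hsub⟩ := mem_nhdsGT_iff_exists_Ioo_subset.mp hp
  refine ⟨min δ (u - a), lt_min hδ (sub_pos.mpr hu), min_le_left _ _, fun y hy => hsub ?_⟩
  exact ⟨hy.1, hy.2.trans_le (by linarith [min_le_right δ (u - a)])⟩

theorem tendsto_div_sub_nhdsGT_of_hasDerivAt {F F' : ℝ → ℝ} {a b L : ℝ} (hab : a < b)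
    (hF : ∀ x ∈ Ioo a b, HasDerivAt F (F' x) x) (hF0 : Tendsto F (𝓝[>] a) (𝓝 0))
    (hF' : Tendsto F' (𝓝[>] a) (𝓝 L)) :
    Tendsto (fun x => F x / (x - a)) (𝓝[>] a) (𝓝 L) := by
  refine HasDerivAt.lhopital_zero_right_on_Ioo hab hF (fun x _ => (hasDerivAt_id x).sub_const a)
    (fun _ _ => one_ne_zero) hF0 ?_ (by simpa using hF')
  exact tendsto_nhdsWithin_of_tendsto_nhds (by simpa using (continuous_sub_right a).tendsto a)

theorem Real.sign_mul_abs (r : ℝ) : Real.sign r * |r| = r := by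
  rcases lt_trichotomy r 0 with h | rfl | h
  · rw [Real.sign_of_neg h, abs_of_neg h, neg_one_mul, neg_neg]
  · rw [abs_zero, mul_zero]
  · rw [Real.sign_of_pos h, abs_of_pos h, one_mul]

/-- Identification of the average marginal effect near the bunching point `xb`.
`M` is the regression function, `S` the counterfactual function (with `s x = S x - Sp` the
selection function), `X` the treatment with density `f_X` near `xb`.  There is an `ε > 0`
such that, with `I = (xb, xb + ε)`: the conditional CDF of `s (X)` given `X ∈ I` is
differentiable at `s x` for `x ∈ I` with positive derivative `g (s x) =
f_X x / (ℙ(X ∈ I) * |S' x|)`; the limit `g₀` of `g (s x)` as `x ↓ xb` exists, is positive and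
equals `(f₊ / ℙ(X ∈ I)) / |dS|`; and the average marginal effect equals
`dM - sgn dS * (f₊ / ℙ(X ∈ I)) / g₀`. -/
theorem stmt4 {Ω : Type*} [MeasurableSpace Ω] (P : Measure Ω) [IsProbabilityMeasure P]
    (xb : ℝ) (M S M' S' : ℝ → ℝ) (ε₀ : ℝ) (hε₀ : 0 < ε₀)
    (hM : ∀ x ∈ Set.Ioo xb (xb + ε₀), HasDerivAt M (M' x) x)
    (hS : ∀ x ∈ Set.Ioo xb (xb + ε₀), HasDerivAt S (S' x) x)
    (Mp Sp dM dS : ℝ)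
    (hMp : Tendsto M (𝓝[>] xb) (𝓝 Mp))
    (hSp : Tendsto S (𝓝[>] xb) (𝓝 Sp))
    (hlim_eq : Mp = Sp)
    (hdM : Tendsto M' (𝓝[>] xb) (𝓝 dM))
    (hdS : Tendsto S' (𝓝[>] xb) (𝓝 dS))
    (hdS0 : dS ≠ 0)
    (X : Ω → ℝ) (hX : Measurable X)
    (f_X : ℝ → ℝ) (ε₁ : ℝ) (hε₁ : 0 < ε₁)
    (hdens : Measure.map X P = volume.withDensity fun x => ENNReal.ofReal (f_X x))
    (hfc : ContinuousOn f_X (Set.Ioo xb (xb + ε₁)))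
    (fplus : ℝ) (hfplus : Tendsto f_X (𝓝[>] xb) (𝓝 fplus)) (hfpos : 0 < fplus) :
    ∃ ε : ℝ, 0 < ε ∧
      0 < (P (X ⁻¹' Set.Ioo xb (xb + ε))).toReal ∧
      (∀ x ∈ Set.Ioo xb (xb + ε),
        HasDerivAt
          (fun t => (P {ω | S (X ω) - Sp ≤ t ∧ X ω ∈ Set.Ioo xb (xb + ε)}).toReal /
            (P (X ⁻¹' Set.Ioo xb (xb + ε))).toReal)
          (f_X x / ((P (X ⁻¹' Set.Ioo xb (xb + ε))).toReal * |S' x|)) (S x - Sp) ∧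
        0 < f_X x / ((P (X ⁻¹' Set.Ioo xb (xb + ε))).toReal * |S' x|)) ∧
      Tendsto (fun x => f_X x / ((P (X ⁻¹' Set.Ioo xb (xb + ε))).toReal * |S' x|))
        (𝓝[>] xb)
        (𝓝 ((fplus / (P (X ⁻¹' Set.Ioo xb (xb + ε))).toReal) / |dS|)) ∧
      0 < (fplus / (P (X ⁻¹' Set.Ioo xb (xb + ε))).toReal) / |dS| ∧
      Tendsto (fun x => (M x - S x) / (x - xb)) (𝓝[>] xb)
        (𝓝 (dM - Real.sign dS * (fplus / (P (X ⁻¹' Set.Ioo xb (xb + ε))).toReal) /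
          ((fplus / (P (X ⁻¹' Set.Ioo xb (xb + ε))).toReal) / |dS|))) := by
  obtain ⟨ε, hε, hεδ, hgood⟩ := exists_pos_le_forall_Ioo (lt_min hε₀ hε₁)
    ((hfplus.eventually (lt_mem_nhds hfpos)).and (hdS.eventually_ne hdS0))
  refine ⟨ε, hε, ?_⟩
  set I := Ioo xb (xb + ε)
  have hI₀ : I ⊆ Ioo xb (xb + ε₀) := Ioo_subset_Ioo_right (by linarith [min_le_left ε₀ ε₁])
  have hI₁ : I ⊆ Ioo xb (xb + ε₁) := Ioo_subset_Ioo_right (by linarith [min_le_right ε₀ ε₁])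
  have hfI : ∀ y ∈ I, 0 ≤ f_X y := fun y hy => (hgood y hy).1.le
  have hfint : IntegrableOn f_X I := integrableOn_of_map_eq_withDensity hX hdens
    measurableSet_Ioo ((hfc.mono hI₁).aestronglyMeasurable measurableSet_Ioo) hfI
  have hPX : ∀ A ⊆ I, MeasurableSet A → (P (X ⁻¹' A)).toReal = ∫ y in A, f_X y :=
    fun A hAI hA => toReal_measure_preimage_of_map_eq_withDensity hX hdens hA
      (hfint.mono_set hAI) fun y hy => hfI y (hAI hy)
  have hc : 0 < (P (X ⁻¹' I)).toReal := by
    rw [hPX I subset_rfl measurableSet_Ioo]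
    exact setIntegral_Ioo_pos (by linarith) hfint fun y hy => (hgood y hy).1
  set c := (P (X ⁻¹' I)).toReal
  have hSc : ContinuousOn S I := fun y hy => (hS y (hI₀ hy)).continuousAt.continuousWithinAt
  have hG : ∀ t, (P {ω | S (X ω) - Sp ≤ t ∧ X ω ∈ I}).toReal =
      ∫ y in {y ∈ I | S y ≤ t + Sp}, f_X y := fun t => by
    rw [← hPX _ (sep_subset _ _) (hSc.measurableSet_sep_le isOpen_Ioo _)]
    congr 2
    ext ω
    simp [and_comm]
  refine ⟨hc, fun x hx => ⟨?_, ?_⟩, ?_, by positivity, ?_⟩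
  · have hderiv := hasDerivAt_setIntegral_sep_le hfint
      ((hfc.mono hI₁).continuousAt (isOpen_Ioo.mem_nhds hx)) hx (fun y hy => hS y (hI₀ hy))
      fun y hy => (hgood y hy).2
    simp_rw [hG, mul_comm c, ← div_div]
    exact (HasDerivAt.comp_add_const (S x - Sp) Sp (by rwa [sub_add_cancel])).div_const c
  · exact div_pos (hgood x hx).1 (mul_pos hc (abs_pos.mpr (hgood x hx).2))
  · simpa only [div_div, Pi.div_def] using hfplus.div (hdS.abs.const_mul c) (by positivity)
  · rw [mul_div_assoc, div_div_cancel₀ (by positivity), Real.sign_mul_abs]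
    exact tendsto_div_sub_nhdsGT_of_hasDerivAt (by linarith) (fun y hy => (hM y hy).sub (hS y hy))
      (by simpa [hlim_eq] using hMp.sub hSp) (hdM.sub hdS)
end

section
/- Let (Ω, ℱ, ℙ) be a probability space, X* : Ω → ℝ a random variable, and x̄ ∈ ℝ with ℙ(X* ≤ x̄) > 0 and ℙ(X* < x̄) > 0. Let θ ∈ {−1, +1} and let s : ℝ → ℝ be measurable with s(x̄) = 0, with s(X*)·1{X* ≤ x̄} integrable, and such that θ·s(x) < 0 for every x < x̄. Let y₀ ∈ ℝ and let Y : Ω → ℝ be integrable with E[(Y − y₀ − s(X*))·1{X* ≤ x̄}] = 0. Then sgn( y₀ − E[Y·1{X* ≤ x̄}]/ℙ(X* ≤ x̄) ) = θ. -/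
/-! Integrating the moment condition over `A = {X* ≤ x̄}` gives
`y₀ - E[Y | A] = -E[s(X*) | A]`. On `A` the function `θ · s(X*)` is `≤ 0` (it vanishes at `x̄`),
and it is `< 0` on the non-null event `{X* < x̄}`, so `θ · (y₀ - E[Y | A]) > 0`. -/

open Filter Set Topology MeasureTheory

theorem Real.sign_eq_of_mul_pos {θ x : ℝ} (hθ : θ = 1 ∨ θ = -1) (h : 0 < θ * x) :
    Real.sign x = θ := by
  rcases hθ with rfl | rfl
  · exact Real.sign_of_pos (by linarith)
  · exact Real.sign_of_neg (by linarith)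

theorem MeasureTheory.setIntegral_pos_of_nonneg_of_pos_on {X : Type*} [MeasurableSpace X]
    {μ : Measure X} {f : X → ℝ} {s t : Set X} (hs : MeasurableSet s)
    (hfi : IntegrableOn f s μ) (hf : ∀ x ∈ s, 0 ≤ f x) (hts : t ⊆ s)
    (hft : ∀ x ∈ t, 0 < f x) (ht : 0 < μ t) : 0 < ∫ x in s, f x ∂μ := by
  rw [setIntegral_pos_iff_support_of_nonneg_ae (ae_restrict_of_forall_mem hs hf) hfi]
  exact ht.trans_le (measure_mono fun x hx => ⟨(hft x hx).ne', hts hx⟩)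

theorem stmt5_general {Ω : Type*} [MeasurableSpace Ω] (P : Measure Ω) [IsProbabilityMeasure P]
    (Xstar : Ω → ℝ) (hXstar : Measurable Xstar) (xb : ℝ)
    (hple : 0 < P {ω | Xstar ω ≤ xb}) (hplt : 0 < P {ω | Xstar ω < xb})
    (θ : ℝ) (hθ : θ = 1 ∨ θ = -1)
    (s : ℝ → ℝ) (hsxb : s xb = 0)
    (hint : Integrable ({ω | Xstar ω ≤ xb}.indicator fun ω => s (Xstar ω)) P)
    (hsign : ∀ x < xb, θ * s x < 0)
    (y₀ : ℝ) (Y : Ω → ℝ) (hY : Integrable Y P)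
    (hmean : ∫ ω, ({ω | Xstar ω ≤ xb}.indicator fun ω => Y ω - y₀ - s (Xstar ω)) ω ∂P = 0) :
    Real.sign (y₀ -
      (∫ ω, ({ω | Xstar ω ≤ xb}.indicator Y) ω ∂P) / (P {ω | Xstar ω ≤ xb}).toReal) = θ := by
  set A := {ω | Xstar ω ≤ xb}
  have hA : MeasurableSet A := hXstar measurableSet_Iic
  have hsA : IntegrableOn (fun ω => s (Xstar ω)) A P := (integrable_indicator_iff hA).1 hint
  have hp : 0 < P.real A := ENNReal.toReal_pos hple.ne' (measure_ne_top P A)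
  have hbalance : ∫ ω in A, Y ω ∂P = P.real A * y₀ + ∫ ω in A, s (Xstar ω) ∂P := by
    have hYA : IntegrableOn Y A P := hY.integrableOn
    have hy₀A : IntegrableOn (fun _ => y₀) A P := integrableOn_const ..
    rw [integral_indicator hA, integral_sub (f := fun ω => Y ω - y₀) (hYA.sub hy₀A) hsA,
      integral_sub hYA hy₀A, setIntegral_const, smul_eq_mul] at hmean
    linarith
  have hbias : 0 < ∫ ω in A, -θ * s (Xstar ω) ∂P := by
    refine setIntegral_pos_of_nonneg_of_pos_on (t := {ω | Xstar ω < xb}) hA (hsA.const_mul _)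
      (fun ω hω => ?_) (fun ω (hω : Xstar ω < xb) => hω.le)
      (fun ω hω => by linarith [hsign _ hω]) hplt
    rcases (show Xstar ω ≤ xb from hω).lt_or_eq with hlt | heq
    · linarith [hsign _ hlt]
    · simp [heq, hsxb]
  rw [integral_indicator hA, ← measureReal_def, hbalance]
  refine Real.sign_eq_of_mul_pos hθ ?_
  rw [integral_const_mul] at hbias
  have hscaled : θ * (y₀ - (P.real A * y₀ + ∫ ω in A, s (Xstar ω) ∂P) / P.real A)
      = (-θ * ∫ ω in A, s (Xstar ω) ∂P) / P.real A := by
    field_simp; ring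
  rw [hscaled]
  exact div_pos hbias hp

/-- Identification of the sign of the selection bias: in the bunching model the treatment is
`X = max (X*, xb)`, so the event `{X = xb}` is `{X* ≤ xb}`.  If the selection function `s`
vanishes at `xb` and satisfies `θ * s x < 0` for all `x < xb` (with `θ ∈ {−1, +1}`), and the
outcome `Y` satisfies `E[(Y − y₀ − s (X*))·1{X* ≤ xb}] = 0`, then
`sgn (y₀ − E[Y·1{X* ≤ xb}] / ℙ(X* ≤ xb)) = θ`. -/
theorem stmt5 {Ω : Type*} [MeasurableSpace Ω] (P : Measure Ω) [IsProbabilityMeasure P]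
    (Xstar : Ω → ℝ) (hXstar : Measurable Xstar) (xb : ℝ)
    (hple : 0 < P {ω | Xstar ω ≤ xb}) (hplt : 0 < P {ω | Xstar ω < xb})
    (θ : ℝ) (hθ : θ = 1 ∨ θ = -1)
    (s : ℝ → ℝ) (hs : Measurable s) (hsxb : s xb = 0)
    (hint : Integrable ({ω | Xstar ω ≤ xb}.indicator fun ω => s (Xstar ω)) P)
    (hsign : ∀ x < xb, θ * s x < 0)
    (y₀ : ℝ) (Y : Ω → ℝ) (hY : Integrable Y P)
    (hmean : ∫ ω, ({ω | Xstar ω ≤ xb}.indicator fun ω => Y ω - y₀ - s (Xstar ω)) ω ∂P = 0) :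
    Real.sign (y₀ -
      (∫ ω, ({ω | Xstar ω ≤ xb}.indicator Y) ω ∂P) / (P {ω | Xstar ω ≤ xb}).toReal) = θ :=
  stmt5_general P Xstar hXstar xb hple hplt θ hθ s hsxb hint hsign y₀ Y hY hmean
end

section
/- Let (Ω, ℱ, ℙ) be a probability space and let X, W : Ω → ℝ be independent random variables with W integrable. Let s : ℝ → ℝ be measurable with s(X) integrable, and set Y := s(X) + W. Then the conditional expectation of Y given the σ-algebra generated by X satisfies E[Y | σ(X)] = s(X) + E[W] almost surely; consequently Y − E[Y | σ(X)] = W − E[W] almost surely, and Y − E[Y | σ(X)] is independent of X. Conversely, if Y : Ω → ℝ is integrable and μ : ℝ → ℝ is measurable with μ(X) a version of E[Y | σ(X)] and with Y − μ(X) independent of X, then Y = s(X) + W almost surely for the measurable function s := μ and the random variable W := Y − μ(X), which is independent of X. -/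
open Filter Set Topology MeasureTheory ProbabilityTheory

/-! Given `σ(X)`, the summand `s(X)` is known and the independent disturbance `W` carries no
information, so `E[s(X) + W | σ(X)] = s(X) + E[W]`; the residual is then `W − E[W]`, a
function of `W` alone, hence independent of `X`. Conversely the residual itself serves as the
disturbance. -/

section CondExpAddIndep

variable {Ω E : Type*} [NormedAddCommGroup E] [NormedSpace ℝ E] [CompleteSpace E]
  {m₁ m₂ m : MeasurableSpace Ω} {μ : Measure Ω} {f g : Ω → E}

theorem condExp_add_indep_eq (hle₁ : m₁ ≤ m) (hle₂ : m₂ ≤ m) [SigmaFinite (μ.trim hle₂)]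
    (hf : StronglyMeasurable[m₂] f) (hfi : Integrable f μ)
    (hg : StronglyMeasurable[m₁] g) (hgi : Integrable g μ) (hindp : Indep m₁ m₂ μ) :
    μ[f + g | m₂] =ᵐ[μ] f + fun _ => μ[g] := by
  have hg_mean : μ[g | m₂] =ᵐ[μ] fun _ => μ[g] := condExp_indep_eq hle₁ hle₂ hg hindp
  calc μ[f + g | m₂] =ᵐ[μ] μ[f | m₂] + μ[g | m₂] := condExp_add hfi hgi m₂
    _ = f + μ[g | m₂] := by rw [condExp_of_stronglyMeasurable hle₂ hf hfi]
    _ =ᵐ[μ] f + fun _ => μ[g] := hg_mean.add_left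

theorem add_sub_condExp_add_indep_eq (hle₁ : m₁ ≤ m) (hle₂ : m₂ ≤ m)
    [SigmaFinite (μ.trim hle₂)] (hf : StronglyMeasurable[m₂] f) (hfi : Integrable f μ)
    (hg : StronglyMeasurable[m₁] g) (hgi : Integrable g μ) (hindp : Indep m₁ m₂ μ) :
    f + g - μ[f + g | m₂] =ᵐ[μ] g - fun _ => μ[g] := by
  filter_upwards [condExp_add_indep_eq hle₁ hle₂ hf hfi hg hgi hindp] with ω hω
  simp only [Pi.sub_apply, Pi.add_apply, hω]
  abel

end CondExpAddIndep

/-- Additivity–independence equivalence.  Forward direction: if `X` and `W` are independent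
with `W` integrable and `s (X)` integrable, then `E[s(X) + W | σ(X)] = s(X) + E[W]` a.s.,
the residual equals `W − E[W]` a.s., and the residual is independent of `X`.  Converse: if
`Y` is integrable, `μfn (X)` is a version of `E[Y | σ(X)]`, and `Y − μfn (X)` is independent
of `X`, then `Y` decomposes a.s. as a measurable function of `X` plus a disturbance
independent of `X`. -/
theorem stmt16 {Ω : Type*} [MeasurableSpace Ω] (P : Measure Ω) [IsProbabilityMeasure P]
    (X : Ω → ℝ) (hX : Measurable X) :
    (∀ (W : Ω → ℝ) (s : ℝ → ℝ), Measurable W → IndepFun X W P →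
      Integrable W P → Measurable s → Integrable (fun ω => s (X ω)) P →
      (P[(fun ω => s (X ω) + W ω)|MeasurableSpace.comap X Real.measurableSpace]
          =ᵐ[P] fun ω => s (X ω) + ∫ ω', W ω' ∂P) ∧
      ((fun ω => (s (X ω) + W ω) -
          (P[(fun ω => s (X ω) + W ω)|MeasurableSpace.comap X Real.measurableSpace]) ω)
          =ᵐ[P] fun ω => W ω - ∫ ω', W ω' ∂P) ∧
      IndepFun
        (fun ω => (s (X ω) + W ω) -
          (P[(fun ω => s (X ω) + W ω)|MeasurableSpace.comap X Real.measurableSpace]) ω)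
        X P) ∧
    (∀ (Y : Ω → ℝ) (μfn : ℝ → ℝ), Integrable Y P → Measurable μfn →
      ((fun ω => μfn (X ω)) =ᵐ[P] P[Y|MeasurableSpace.comap X Real.measurableSpace]) →
      IndepFun (fun ω => Y ω - μfn (X ω)) X P →
      ∃ (s : ℝ → ℝ) (W : Ω → ℝ), Measurable s ∧ IndepFun W X P ∧
        ∀ᵐ ω ∂P, Y ω = s (X ω) + W ω) := by
  refine ⟨fun W s hW hXW hWi hs hsXi => ?_, fun Y μfn _ hμfn _ hindep => ?_⟩
  · have hsX : StronglyMeasurable[MeasurableSpace.comap X _] (fun ω => s (X ω)) :=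
      (hs.comp (comap_measurable X)).stronglyMeasurable
    have hWσ : StronglyMeasurable[MeasurableSpace.comap W _] W :=
      (comap_measurable W).stronglyMeasurable
    have hindp := (IndepFun_iff_Indep W X P).mp hXW.symm
    have hresidual := add_sub_condExp_add_indep_eq hW.comap_le hX.comap_le hsX hsXi hWσ hWi hindp
    have hcentered : IndepFun (fun ω => W ω - ∫ ω', W ω' ∂P) X P :=
      hXW.symm.comp (measurable_id.sub_const _) measurable_id
    exact ⟨condExp_add_indep_eq hW.comap_le hX.comap_le hsX hsXi hWσ hWi hindp, hresidual,
      hcentered.congr hresidual.symm .rfl⟩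
  · exact ⟨μfn, fun ω => Y ω - μfn (X ω), hμfn, hindep, .of_forall fun ω => by ring⟩
end
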